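/- Let λ be a partition with d distinct nonzero part sizes u_1 > ⋯ > u_d, let v_i be the multiplicity of u_i in λ and h_i = u_i − u_{i+1} (with u_{d+1}=0), and set x_i = h_1+⋯+h_i, y_i = v_1+⋯+v_i, x_0 = y_0 = 0. For 0 ≤ s ≤ d, let λ^{(+s)} be the partition obtained from λ by adding one cell at the end of row y_s + 1 (so U(λ) = {λ^{(+0)},…,λ^{(+d)}}). Then for each 0 ≤ s ≤ d, in ℚ(q,t): t^{y_s} · α_{λ^{(+s)}/λ}(q,t) = ∏_{i=1}^{d} (q^{x_s}t^{y_s} − q^{x_{i−1}}t^{y_i}) / ∏_{0 ≤ i ≤ d, i ≠ s} (q^{x_s}t^{y_s} − q^{x_i}t^{y_i}). -/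

import Mathlib

open Finset

noncomputable section

/-- The field `ℚ(q,t)` of rational functions in two variables over `ℚ`. -/
abbrev K : Type := FractionRing (MvPolynomial (Fin 2) ℚ)

def q : K := algebraMap (MvPolynomial (Fin 2) ℚ) K (MvPolynomial.X 0)
def t : K := algebraMap (MvPolynomial (Fin 2) ℚ) K (MvPolynomial.X 1)

/-- Arm-length of the cell `c = (row, col)` of `κ` (cells are 0-indexed, Mathlib convention). -/
def arm (κ : YoungDiagram) (c : ℕ × ℕ) : ℕ := κ.rowLen c.1 - c.2 - 1

/-- Leg-length of the cell `c = (row, col)` of `κ`. -/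
def leg (κ : YoungDiagram) (c : ℕ × ℕ) : ℕ := κ.colLen c.2 - c.1 - 1

/-- Hook-length of the cell `c` of `κ`. -/
def hook (κ : YoungDiagram) (c : ℕ × ℕ) : ℕ := arm κ c + leg κ c + 1

/-- `Covers μ λ` means `μ ⋖ λ` in Young's lattice. -/
def Covers (μ l : YoungDiagram) : Prop :=
  μ.cells ⊆ l.cells ∧ l.cells.card = μ.cells.card + 1

open scoped Classical in
/-- For `μ ⋖ λ`, the set `R_{λ/μ}` of cells of `μ` in the same row as the unique cell of `λ/μ`. -/
def Rset (μ l : YoungDiagram) : Finset (ℕ × ℕ) :=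
  μ.cells.filter fun c => ∃ d ∈ l.cells \ μ.cells, c.1 = d.1

open scoped Classical in
/-- For `μ ⋖ λ`, the set `C_{λ/μ}` of cells of `μ` in the same column as the unique cell of `λ/μ`. -/
def Cset (μ l : YoungDiagram) : Finset (ℕ × ℕ) :=
  μ.cells.filter fun c => ∃ d ∈ l.cells \ μ.cells, c.2 = d.2

/-- `[i,j] = 1 - q^i t^j`. -/
def brk (i j : ℕ) : K := 1 - q ^ i * t ^ j

/-- `b_κ(c) = (1 - q^{a} t^{ℓ+1})/(1 - q^{a+1} t^{ℓ})`. -/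
def bcell (κ : YoungDiagram) (c : ℕ × ℕ) : K :=
  brk (arm κ c) (leg κ c + 1) / brk (arm κ c + 1) (leg κ c)

/-- `ψ_{λ/μ}(q,t)` for `μ ⋖ λ`. -/
def ψqt (μ l : YoungDiagram) : K := ∏ c ∈ Rset μ l, bcell μ c / bcell l c

/-- `φ_{λ/μ}(q,t)` for `μ ⋖ λ`. -/
def φqt (μ l : YoungDiagram) : K :=
  ((1 - t) / (1 - q)) * ∏ c ∈ Cset μ l, bcell l c / bcell μ c

/-- `α_{ν/λ}(q,t)` for `λ ⋖ ν`. -/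
def alph (l ν : YoungDiagram) : K :=
  (∏ c ∈ Rset l ν, brk (arm l c) (leg l c + 1) / brk (arm ν c) (leg ν c + 1)) *
  (∏ c ∈ Cset l ν, brk (arm l c + 1) (leg l c) / brk (arm ν c + 1) (leg ν c))

/-- `ᾱ_{ν/λ}(q,t)` for `λ ⋖ ν`. -/
def alphBar (l ν : YoungDiagram) : K :=
  (∏ c ∈ Rset l ν, brk (arm l c + 1) (leg l c) / brk (arm ν c + 1) (leg ν c)) *
  (∏ c ∈ Cset l ν, brk (arm l c) (leg l c + 1) / brk (arm ν c) (leg ν c + 1))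

/-- `n(κ) = ∑_{c ∈ κ} ℓ_κ(c)` (as an integer). -/
def nstat (κ : YoungDiagram) : ℤ := ∑ c ∈ κ.cells, (leg κ c : ℤ)

/-- `n'(κ) = ∑_{c ∈ κ} a_κ(c)` (as an integer). -/
def nstat' (κ : YoungDiagram) : ℤ := ∑ c ∈ κ.cells, (arm κ c : ℤ)

/-! Adding a cell at the end of row `r` lengthens by one exactly the arms of the cells to its left
and the legs of the cells below it, so `α` is a product of ratios `[a, m] / [a + 1, m]` along that
row and `[A, ℓ] / [A, ℓ + 1]` along that column. For the shape at hand `m` (resp. `A`) is constant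
on each block of equal columns (resp. rows), so every block telescopes to a single ratio. Up to a
monomial, that ratio is the quotient of the factor `q^{x_s}t^{y_s} - q^{x_k}t^{y_{k+1}}` of the
numerator by the factor `q^{x_s}t^{y_s} - q^{x_k}t^{y_k}` (for `k < s`), resp.
`q^{x_s}t^{y_s} - q^{x_{k+1}}t^{y_{k+1}}` (for `k ≥ s`), of the denominator; the monomials
multiply to `t^{y_s}`. -/

lemma q_ne_zero : q ≠ 0 :=
  (map_ne_zero_iff _ (IsFractionRing.injective _ K)).2 (MvPolynomial.X_ne_zero 0)

lemma t_ne_zero : t ≠ 0 :=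
  (map_ne_zero_iff _ (IsFractionRing.injective _ K)).2 (MvPolynomial.X_ne_zero 1)

lemma brk_ne_zero {i j : ℕ} (h : i ≠ 0 ∨ j ≠ 0) : brk i j ≠ 0 := by
  rw [brk, sub_ne_zero, ne_comm]
  intro hij
  have hX : (MvPolynomial.X 0 ^ i * MvPolynomial.X 1 ^ j : MvPolynomial (Fin 2) ℚ) = 1 := by
    apply IsFractionRing.injective _ K
    simpa [q, t] using hij
  have hdeg := congrArg MvPolynomial.totalDegree hX
  rw [MvPolynomial.totalDegree_mul_of_isDomain (pow_ne_zero _ (MvPolynomial.X_ne_zero _))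
    (pow_ne_zero _ (MvPolynomial.X_ne_zero _)), MvPolynomial.totalDegree_X_pow,
    MvPolynomial.totalDegree_X_pow, MvPolynomial.totalDegree_one] at hdeg
  omega

lemma qt_sub_qt_eq_mul_brk {a b c e : ℕ} (hac : a ≤ c) (hbe : b ≤ e) :
    q ^ a * t ^ b - q ^ c * t ^ e = q ^ a * t ^ b * brk (c - a) (e - b) := by
  obtain ⟨c, rfl⟩ := Nat.exists_eq_add_of_le hac
  obtain ⟨e, rfl⟩ := Nat.exists_eq_add_of_le hbe
  simp only [brk, Nat.add_sub_cancel_left]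
  ring

namespace Finset

lemma prod_Ico_div_of_ne_zero {G₀ : Type*} [CommGroupWithZero G₀] (f : ℕ → G₀) {m n : ℕ}
    (hmn : m ≤ n) (hf : ∀ i ∈ Icc m n, f i ≠ 0) :
    ∏ i ∈ Ico m n, f (i + 1) / f i = f n / f m := by
  induction n, hmn using Nat.le_induction with
  | base => simp [div_self (hf m (by simp))]
  | succ n hmn ih =>
    rw [prod_Ico_succ_top hmn, ih fun i hi => hf i (Icc_subset_Icc_right n.le_succ hi),
      div_mul_div_cancel₀' (hf n (by simp; omega))]

lemma prod_Ico_eq_prod_blocks_of_monotoneOn {M : Type*} [CommMonoid M] (F : ℕ → M)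
    {g : ℕ → ℕ} {a b : ℕ} (hab : a ≤ b) (hg : MonotoneOn g (Set.Icc a b)) :
    ∏ i ∈ Ico (g a) (g b), F i = ∏ k ∈ Ico a b, ∏ i ∈ Ico (g k) (g (k + 1)), F i := by
  induction b, hab using Nat.le_induction with
  | base => simp
  | succ b hab ih =>
    have hmem : ∀ k, a ≤ k → k ≤ b + 1 → k ∈ Set.Icc a (b + 1) := fun k h1 h2 => ⟨h1, h2⟩
    rw [prod_Ico_succ_top hab, ← ih (hg.mono (Set.Icc_subset_Icc_right b.le_succ)),
      prod_Ico_consecutive _ (hg (hmem a le_rfl (by omega)) (hmem b hab (by omega)) hab)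
        (hg (hmem b hab (by omega)) (hmem (b + 1) (by omega) le_rfl) b.le_succ)]

lemma prod_Ico_eq_prod_blocks_of_antitoneOn {M : Type*} [CommMonoid M] (F : ℕ → M)
    {g : ℕ → ℕ} {a b : ℕ} (hab : a ≤ b) (hg : AntitoneOn g (Set.Icc a b)) :
    ∏ i ∈ Ico (g b) (g a), F i = ∏ k ∈ Ico a b, ∏ i ∈ Ico (g (k + 1)) (g k), F i := by
  induction b, hab using Nat.le_induction with
  | base => simp
  | succ b hab ih =>
    have hmem : ∀ k, a ≤ k → k ≤ b + 1 → k ∈ Set.Icc a (b + 1) := fun k h1 h2 => ⟨h1, h2⟩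
    rw [prod_Ico_succ_top hab, ← ih (hg.mono (Set.Icc_subset_Icc_right b.le_succ)), mul_comm,
      prod_Ico_consecutive _ (hg (hmem b hab (by omega)) (hmem (b + 1) (by omega) le_rfl) b.le_succ)
        (hg (hmem a le_rfl (by omega)) (hmem b hab (by omega)) hab)]

end Finset

namespace YoungDiagram

lemma rowLen_eq_of_forall_mem_iff {μ : YoungDiagram} {a m : ℕ} (h : ∀ b, (a, b) ∈ μ ↔ b < m) :
    μ.rowLen a = m :=
  eq_of_forall_lt_iff fun b => by rw [← mem_iff_lt_rowLen, h]

lemma colLen_eq_of_forall_mem_iff {μ : YoungDiagram} {b m : ℕ} (h : ∀ a, (a, b) ∈ μ ↔ a < m) :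
    μ.colLen b = m :=
  eq_of_forall_lt_iff fun a => by rw [← mem_iff_lt_colLen, h]

section AddCell

variable {μ ν : YoungDiagram} {r : ℕ}

lemma mem_of_cells_eq_insert (h : ν.cells = insert (r, μ.rowLen r) μ.cells) {a b : ℕ} :
    (a, b) ∈ ν ↔ (a, b) ∈ μ ∨ a = r ∧ b = μ.rowLen r := by
  rw [← mem_cells, h, mem_insert, mem_cells, Prod.ext_iff, or_comm]

lemma rowLen_of_cells_eq_insert (h : ν.cells = insert (r, μ.rowLen r) μ.cells) :
    ν.rowLen r = μ.rowLen r + 1 :=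
  rowLen_eq_of_forall_mem_iff fun b => by
    rw [mem_of_cells_eq_insert h, mem_iff_lt_rowLen]
    omega

lemma rowLen_of_cells_eq_insert_of_ne (h : ν.cells = insert (r, μ.rowLen r) μ.cells) {a : ℕ}
    (ha : a ≠ r) : ν.rowLen a = μ.rowLen a :=
  rowLen_eq_of_forall_mem_iff fun b => by
    rw [mem_of_cells_eq_insert h, mem_iff_lt_rowLen]
    tauto

lemma colLen_rowLen_of_cells_eq_insert (h : ν.cells = insert (r, μ.rowLen r) μ.cells) :
    μ.colLen (μ.rowLen r) = r :=
  colLen_eq_of_forall_mem_iff fun a => by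
    constructor
    · intro ha
      by_contra! hra
      exact (mem_iff_lt_rowLen.1 (μ.up_left_mem hra le_rfl ha)).false
    · intro ha
      have hν : (a, μ.rowLen r) ∈ ν :=
        ν.up_left_mem ha.le le_rfl ((mem_of_cells_eq_insert h).2 (Or.inr ⟨rfl, rfl⟩))
      exact ((mem_of_cells_eq_insert h).1 hν).resolve_right (by omega)

lemma colLen_of_cells_eq_insert (h : ν.cells = insert (r, μ.rowLen r) μ.cells) :
    ν.colLen (μ.rowLen r) = r + 1 :=
  colLen_eq_of_forall_mem_iff fun a => by
    rw [mem_of_cells_eq_insert h, mem_iff_lt_colLen, colLen_rowLen_of_cells_eq_insert h]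
    omega

lemma colLen_of_cells_eq_insert_of_ne (h : ν.cells = insert (r, μ.rowLen r) μ.cells) {b : ℕ}
    (hb : b ≠ μ.rowLen r) : ν.colLen b = μ.colLen b :=
  colLen_eq_of_forall_mem_iff fun a => by
    rw [mem_of_cells_eq_insert h, mem_iff_lt_colLen]
    tauto

lemma cells_sdiff_of_cells_eq_insert (h : ν.cells = insert (r, μ.rowLen r) μ.cells) :
    ν.cells \ μ.cells = {(r, μ.rowLen r)} := by
  rw [h, insert_sdiff_of_notMem _ (by simp [mem_iff_lt_rowLen]), sdiff_self, bot_eq_empty,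
    insert_empty_eq]

lemma Rset_of_cells_eq_insert (h : ν.cells = insert (r, μ.rowLen r) μ.cells) :
    Rset μ ν = (range (μ.rowLen r)).image fun b => (r, b) := by
  ext ⟨a, b⟩
  simp only [Rset, cells_sdiff_of_cells_eq_insert h, mem_filter, mem_singleton, exists_eq_left,
    mem_cells, mem_image, mem_range, Prod.mk.injEq]
  constructor
  · rintro ⟨hab, rfl⟩
    exact ⟨b, mem_iff_lt_rowLen.1 hab, rfl, rfl⟩
  · rintro ⟨b, hb, rfl, rfl⟩
    exact ⟨mem_iff_lt_rowLen.2 hb, rfl⟩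

lemma Cset_of_cells_eq_insert (h : ν.cells = insert (r, μ.rowLen r) μ.cells) :
    Cset μ ν = (range r).image fun a => (a, μ.rowLen r) := by
  ext ⟨a, b⟩
  simp only [Cset, cells_sdiff_of_cells_eq_insert h, mem_filter, mem_singleton, exists_eq_left,
    mem_cells, mem_image, mem_range, Prod.mk.injEq]
  constructor
  · rintro ⟨hab, rfl⟩
    rw [mem_iff_lt_colLen, colLen_rowLen_of_cells_eq_insert h] at hab
    exact ⟨a, hab, rfl, rfl⟩
  · rintro ⟨a, ha, rfl, rfl⟩
    rw [mem_iff_lt_colLen, colLen_rowLen_of_cells_eq_insert h]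
    exact ⟨ha, rfl⟩

end AddCell

end YoungDiagram

open YoungDiagram in
lemma alph_of_cells_eq_insert {μ ν : YoungDiagram} {r : ℕ}
    (h : ν.cells = insert (r, μ.rowLen r) μ.cells) :
    alph μ ν =
      (∏ b ∈ range (μ.rowLen r),
        brk (μ.rowLen r - (b + 1)) (μ.colLen b - r) / brk (μ.rowLen r - b) (μ.colLen b - r)) *
      ∏ a ∈ range r,
        brk (μ.rowLen a - μ.rowLen r) (r - (a + 1)) / brk (μ.rowLen a - μ.rowLen r) (r - a) := by
  rw [alph, Rset_of_cells_eq_insert h, Cset_of_cells_eq_insert h,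
    prod_image fun _ _ _ _ hb => (Prod.mk.inj hb).2,
    prod_image fun _ _ _ _ ha => (Prod.mk.inj ha).1]
  congr 1
  · refine prod_congr rfl fun b hb => ?_
    have hrb : r < μ.colLen b := mem_iff_lt_colLen.1 (mem_iff_lt_rowLen.2 (mem_range.1 hb))
    have hb' : b ≠ μ.rowLen r := (mem_range.1 hb).ne
    simp only [arm, leg, rowLen_of_cells_eq_insert h, colLen_of_cells_eq_insert_of_ne h hb']
    congr 2 <;> omega
  · refine prod_congr rfl fun a ha => ?_
    have hra : μ.rowLen r < μ.rowLen a :=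
      mem_iff_lt_rowLen.1 (mem_iff_lt_colLen.2 ((colLen_rowLen_of_cells_eq_insert h).symm ▸
        mem_range.1 ha))
    have ha' : a ≠ r := (mem_range.1 ha).ne
    simp only [arm, leg, rowLen_of_cells_eq_insert_of_ne h ha', colLen_of_cells_eq_insert h,
      colLen_rowLen_of_cells_eq_insert h]
    congr 2 <;> omega

/-- `x i` and `y i` are the partial sums `h₁ + ⋯ + hᵢ` and `v₁ + ⋯ + vᵢ` of the paper. -/
structure HasRowBlocks (l : YoungDiagram) (d : ℕ) (x y : ℕ → ℕ) : Prop where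
  y_zero : y 0 = 0
  x_strictMonoOn : StrictMonoOn x (Set.Iic d)
  y_strictMonoOn : StrictMonoOn y (Set.Iic d)
  colLen_zero : l.colLen 0 = y d
  rowLen_eq : ∀ i < d, ∀ r, y i ≤ r → r < y (i + 1) → l.rowLen r = x d - x i

namespace HasRowBlocks

variable {l : YoungDiagram} {d : ℕ} {x y : ℕ → ℕ} {i j s : ℕ}

lemma x_lt (h : HasRowBlocks l d x y) (hij : i < j) (hj : j ≤ d) : x i < x j :=
  h.x_strictMonoOn (Set.mem_Iic.2 (by omega)) (Set.mem_Iic.2 hj) hij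

lemma x_le (h : HasRowBlocks l d x y) (hij : i ≤ j) (hj : j ≤ d) : x i ≤ x j :=
  h.x_strictMonoOn.monotoneOn (Set.mem_Iic.2 (by omega)) (Set.mem_Iic.2 hj) hij

lemma y_lt (h : HasRowBlocks l d x y) (hij : i < j) (hj : j ≤ d) : y i < y j :=
  h.y_strictMonoOn (Set.mem_Iic.2 (by omega)) (Set.mem_Iic.2 hj) hij

lemma y_le (h : HasRowBlocks l d x y) (hij : i ≤ j) (hj : j ≤ d) : y i ≤ y j :=
  h.y_strictMonoOn.monotoneOn (Set.mem_Iic.2 (by omega)) (Set.mem_Iic.2 hj) hij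

lemma rowLen_y (h : HasRowBlocks l d x y) (hi : i ≤ d) : l.rowLen (y i) = x d - x i := by
  rcases hi.lt_or_eq with hi | rfl
  · exact h.rowLen_eq i hi (y i) le_rfl (h.y_lt (Nat.lt_add_one i) hi)
  · rw [Nat.sub_self, ← Nat.le_zero, ← not_lt, ← YoungDiagram.mem_iff_lt_rowLen,
      YoungDiagram.mem_iff_lt_colLen, h.colLen_zero]
    exact lt_irrefl _

lemma colLen_eq (h : HasRowBlocks l d x y) (hi : i < d) (hj : x d - x (i + 1) ≤ j)
    (hj' : j < x d - x i) : l.colLen j = y (i + 1) :=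
  YoungDiagram.colLen_eq_of_forall_mem_iff fun a => by
    rw [YoungDiagram.mem_iff_lt_rowLen]
    constructor
    · intro hja
      by_contra! ha
      have := l.rowLen_anti _ _ ha
      rw [h.rowLen_y (show i + 1 ≤ d from hi)] at this
      omega
    · intro ha
      have hlast := h.rowLen_eq i hi (y (i + 1) - 1)
        (by have := h.y_lt (Nat.lt_add_one i) hi; omega) (by omega)
      have := l.rowLen_anti a (y (i + 1) - 1) (by omega)
      omega


/-- Along row `y s`, the columns `x d - x (k + 1) ≤ b < x d - x k` all have length `y (k + 1)`,
so each such block telescopes. -/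
lemma prod_row (h : HasRowBlocks l d x y) (hs : s ≤ d) :
    ∏ b ∈ range (x d - x s),
        brk (x d - x s - (b + 1)) (l.colLen b - y s) / brk (x d - x s - b) (l.colLen b - y s) =
      ∏ k ∈ Ico s d,
        brk (x k - x s) (y (k + 1) - y s) / brk (x (k + 1) - x s) (y (k + 1) - y s) := by
  have hanti : AntitoneOn (fun k => x d - x k) (Set.Icc s d) :=
    fun i _ j hj hij => Nat.sub_le_sub_left (h.x_le hij hj.2) _
  rw [range_eq_Ico, ← Nat.sub_self (x d), prod_Ico_eq_prod_blocks_of_antitoneOn _ hs hanti]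
  refine prod_congr rfl fun k hk => ?_
  obtain ⟨hsk, hkd⟩ := mem_Ico.1 hk
  have hxk := h.x_le hsk hkd.le
  have hxk' := h.x_lt (Nat.lt_add_one k) hkd
  have hxd := h.x_le (show k + 1 ≤ d from hkd) le_rfl
  have hys := h.y_lt (show s < k + 1 by omega) hkd
  let f : ℕ → K := fun b => brk (x d - x s - b) (y (k + 1) - y s)
  calc _ = ∏ b ∈ Ico (x d - x (k + 1)) (x d - x k), f (b + 1) / f b :=
        prod_congr rfl fun b hb => by
          rw [h.colLen_eq hkd (mem_Ico.1 hb).1 (mem_Ico.1 hb).2]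
    _ = f (x d - x k) / f (x d - x (k + 1)) :=
        prod_Ico_div_of_ne_zero f (by omega) fun _ _ => brk_ne_zero (Or.inr (by omega))
    _ = _ := by
      simp only [f]
      congr 2 <;> omega

/-- Along column `x d - x s`, the rows `y i ≤ a < y (i + 1)` all have length `x d - x i`,
so each such block telescopes. -/
lemma prod_col (h : HasRowBlocks l d x y) (hs : s ≤ d) :
    ∏ a ∈ range (y s), brk (l.rowLen a - (x d - x s)) (y s - (a + 1)) /
        brk (l.rowLen a - (x d - x s)) (y s - a) =
      ∏ i ∈ range s, brk (x s - x i) (y s - y (i + 1)) / brk (x s - x i) (y s - y i) := by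
  have hmono : MonotoneOn y (Set.Icc 0 s) :=
    fun i _ j hj hij => h.y_le hij (hj.2.trans hs)
  rw [range_eq_Ico, ← h.y_zero, prod_Ico_eq_prod_blocks_of_monotoneOn _ (Nat.zero_le s) hmono,
    ← range_eq_Ico]
  refine prod_congr rfl fun i hi => ?_
  have his := mem_range.1 hi
  have hxi := h.x_lt his hs
  have hxs := h.x_le hs le_rfl
  let f : ℕ → K := fun a => brk (x s - x i) (y s - a)
  calc _ = ∏ a ∈ Ico (y i) (y (i + 1)), f (a + 1) / f a :=
        prod_congr rfl fun a ha => by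
          rw [h.rowLen_eq i (by omega) a (mem_Ico.1 ha).1 (mem_Ico.1 ha).2]
          congr 2 <;> omega
    _ = f (y (i + 1)) / f (y i) :=
        prod_Ico_div_of_ne_zero f (h.y_le (Nat.le_add_right i 1) (by omega))
          fun _ _ => brk_ne_zero (Or.inl (by omega))

end HasRowBlocks

lemma qt_sub_div_qt_sub_of_le_left {a b b' c e : ℕ} (hac : a ≤ c) (hbb' : b ≤ b') (hb'e : b' ≤ e) :
    (q ^ c * t ^ e - q ^ a * t ^ b') / (q ^ c * t ^ e - q ^ a * t ^ b) =
      t ^ b' / t ^ b * (brk (c - a) (e - b') / brk (c - a) (e - b)) := by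
  rw [← neg_sub (q ^ a * t ^ b'), ← neg_sub (q ^ a * t ^ b), qt_sub_qt_eq_mul_brk hac hb'e,
    qt_sub_qt_eq_mul_brk hac (hbb'.trans hb'e), neg_div_neg_eq, mul_div_mul_comm,
    mul_div_mul_left _ _ (pow_ne_zero _ q_ne_zero)]

lemma qt_sub_div_qt_sub_of_le_right {a b c c' e : ℕ} (hac : a ≤ c) (hac' : a ≤ c') (hbe : b ≤ e) :
    (q ^ a * t ^ b - q ^ c * t ^ e) / (q ^ a * t ^ b - q ^ c' * t ^ e) =
      brk (c - a) (e - b) / brk (c' - a) (e - b) := by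
  rw [qt_sub_qt_eq_mul_brk hac hbe, qt_sub_qt_eq_mul_brk hac' hbe,
    mul_div_mul_left _ _ (mul_ne_zero (pow_ne_zero _ q_ne_zero) (pow_ne_zero _ t_ne_zero))]

lemma Finset.prod_erase_range_succ {M : Type*} [CommMonoid M] (f : ℕ → M) {s d : ℕ}
    (hs : s ≤ d) :
    ∏ i ∈ (range (d + 1)).erase s, f i = (∏ i ∈ range s, f i) * ∏ i ∈ Ico s d, f (i + 1) := by
  have hsplit : (range (d + 1)).erase s = range s ∪ (Ico s d).image (· + 1) := by
    ext i
    simp only [mem_erase, mem_range, mem_union, mem_image, mem_Ico]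
    constructor
    · intro hi
      rcases lt_or_gt_of_ne hi.1 with h | h
      · exact Or.inl h
      · exact Or.inr ⟨i - 1, by omega, by omega⟩
    · rintro (h | ⟨k, hk, rfl⟩) <;> omega
  rw [hsplit, prod_union (disjoint_left.2 fun i hi hi' => by
      simp only [mem_range, mem_image, mem_Ico] at hi hi'
      omega),
    prod_image fun _ _ _ _ => Nat.add_right_cancel]

lemma prod_sub_div_prod_sub_eq {d s : ℕ} {x y : ℕ → ℕ} (hx : MonotoneOn x (Set.Iic d))
    (hy : MonotoneOn y (Set.Iic d)) (hs : s ≤ d) :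
    (∏ i ∈ Icc 1 d, (q ^ x s * t ^ y s - q ^ x (i - 1) * t ^ y i)) /
        ∏ i ∈ (range (d + 1)).erase s, (q ^ x s * t ^ y s - q ^ x i * t ^ y i) =
      t ^ y s / t ^ y 0 *
        ((∏ i ∈ range s, brk (x s - x i) (y s - y (i + 1)) / brk (x s - x i) (y s - y i)) *
          ∏ k ∈ Ico s d, brk (x k - x s) (y (k + 1) - y s) /
            brk (x (k + 1) - x s) (y (k + 1) - y s)) := by
  have mem : ∀ {i}, i ≤ d → i ∈ Set.Iic d := Set.mem_Iic.2
  have hnum : ∏ i ∈ Icc 1 d, (q ^ x s * t ^ y s - q ^ x (i - 1) * t ^ y i) =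
      (∏ k ∈ range s, (q ^ x s * t ^ y s - q ^ x k * t ^ y (k + 1))) *
        ∏ k ∈ Ico s d, (q ^ x s * t ^ y s - q ^ x k * t ^ y (k + 1)) := by
    rw [prod_range_mul_prod_Ico _ hs, ← Ico_add_one_right_eq_Icc, prod_Ico_eq_prod_range,
      Nat.add_sub_cancel]
    exact prod_congr rfl fun k _ => by rw [Nat.add_sub_cancel_left, add_comm]
  have hlow : ∀ k ∈ range s,
      (q ^ x s * t ^ y s - q ^ x k * t ^ y (k + 1)) / (q ^ x s * t ^ y s - q ^ x k * t ^ y k) =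
        t ^ y (k + 1) / t ^ y k *
          (brk (x s - x k) (y s - y (k + 1)) / brk (x s - x k) (y s - y k)) := fun k hk =>
    have hks := mem_range.1 hk
    qt_sub_div_qt_sub_of_le_left (hx (mem (by omega)) (mem hs) hks.le)
      (hy (mem (by omega)) (mem (by omega)) k.le_succ) (hy (mem (by omega)) (mem hs) hks)
  have hhigh : ∀ k ∈ Ico s d,
      (q ^ x s * t ^ y s - q ^ x k * t ^ y (k + 1)) /
          (q ^ x s * t ^ y s - q ^ x (k + 1) * t ^ y (k + 1)) =
        brk (x k - x s) (y (k + 1) - y s) / brk (x (k + 1) - x s) (y (k + 1) - y s) := fun k hk =>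
    have ⟨hsk, hkd⟩ := mem_Ico.1 hk
    qt_sub_div_qt_sub_of_le_right (hx (mem hs) (mem hkd.le) hsk)
      (hx (mem hs) (mem hkd) (by omega)) (hy (mem hs) (mem hkd) (by omega))
  rw [hnum, prod_erase_range_succ _ hs, mul_div_mul_comm, ← prod_div_distrib,
    ← prod_div_distrib, prod_congr rfl hlow, prod_congr rfl hhigh, prod_mul_distrib, mul_assoc,
    range_eq_Ico, prod_Ico_div_of_ne_zero (fun k => t ^ y k) (Nat.zero_le s)
      fun _ _ => pow_ne_zero _ t_ne_zero, ← range_eq_Ico]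

theorem t_alpha_explicit_formula_general (l : YoungDiagram) (d : ℕ) (x y : ℕ → ℕ)
    (hy0 : y 0 = 0)
    (hxmono : ∀ i < d, x i < x (i + 1)) (hymono : ∀ i < d, y i < y (i + 1))
    (hrows : l.colLen 0 = y d)
    (hlen : ∀ i ∈ Finset.Icc 1 d, ∀ r, y (i - 1) ≤ r → r < y i → l.rowLen r = x d - x (i - 1))
    (s : ℕ) (hs : s ≤ d)
    (ν : YoungDiagram) (hν : ν.cells = insert (y s, l.rowLen (y s)) l.cells) :
    t ^ (y s) * alph l ν
      = (∏ i ∈ Finset.Icc 1 d, (q ^ x s * t ^ y s - q ^ x (i - 1) * t ^ y i))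
        / ∏ i ∈ (Finset.range (d + 1)).erase s, (q ^ x s * t ^ y s - q ^ x i * t ^ y i) := by
  have h : HasRowBlocks l d x y :=
    { y_zero := hy0
      x_strictMonoOn := strictMonoOn_Iic_of_lt_succ hxmono
      y_strictMonoOn := strictMonoOn_Iic_of_lt_succ hymono
      colLen_zero := hrows
      rowLen_eq := fun i hi r => hlen (i + 1) (mem_Icc.2 ⟨by omega, hi⟩) r }
  rw [alph_of_cells_eq_insert hν, h.rowLen_y hs, h.prod_row hs, h.prod_col hs,
    prod_sub_div_prod_sub_eq h.x_strictMonoOn.monotoneOn h.y_strictMonoOn.monotoneOn hs, hy0,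
    pow_zero, div_one, mul_comm (∏ k ∈ Ico s d, _)]

/-- Explicit formula for `t^{y_s} α_{λ^{(+s)}/λ}(q,t)` in terms of the parameters of `λ`.
Here `λ` has `d` distinct nonzero part sizes; `x i = h₁+⋯+hᵢ` and `y i = v₁+⋯+vᵢ` are the
partial sums of the horizontal and vertical boundary-segment lengths, so that (0-indexed)
rows `y (i-1), …, y i − 1` of `λ` all have length `x d − x (i−1)` for `1 ≤ i ≤ d`, and `λ` has
exactly `y d` nonempty rows. `λ^{(+s)}` is obtained from `λ` by adding one cell at the end of
row `y s` (0-indexed). -/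
theorem t_alpha_explicit_formula (l : YoungDiagram) (d : ℕ) (x y : ℕ → ℕ)
    (hx0 : x 0 = 0) (hy0 : y 0 = 0)
    (hxmono : ∀ i < d, x i < x (i + 1)) (hymono : ∀ i < d, y i < y (i + 1))
    (hrows : l.colLen 0 = y d)
    (hlen : ∀ i ∈ Finset.Icc 1 d, ∀ r, y (i - 1) ≤ r → r < y i → l.rowLen r = x d - x (i - 1))
    (s : ℕ) (hs : s ≤ d)
    (ν : YoungDiagram) (hν : ν.cells = insert (y s, l.rowLen (y s)) l.cells) :
    t ^ (y s) * alph l ν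
      = (∏ i ∈ Finset.Icc 1 d, (q ^ x s * t ^ y s - q ^ x (i - 1) * t ^ y i))
        / ∏ i ∈ (Finset.range (d + 1)).erase s, (q ^ x s * t ^ y s - q ^ x i * t ^ y i) :=
  t_alpha_explicit_formula_general l d x y hy0 hxmono hymono hrows hlen s hs ν hν

end
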